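/- Let d ≥ 1, λ > 0, and let μ be a probability density on ℝ^d × ℝ^d all of whose moments of order up to 2n are finite. Then the normalizing constant C_λ := ∫_{ℝ^{2d}} exp(−(|p|²/2 + V(q) + (ψ∗μ)(q))/λ) dq dp is finite and positive, and the function u(q,p) := C_λ^{−1} exp(−(|p|²/2 + V(q) + (ψ∗μ)(q))/λ) is a smooth probability density on ℝ^d × ℝ^d that satisfies the linearized stationary Vlasov–Fokker–Planck equation K[μ](u) = 0 pointwise on ℝ^d × ℝ^d. -/

import Mathlib

open MeasureTheory Filter
open scoped RealInnerProductSpace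

noncomputable section

abbrev Euc (d : ℕ) := EuclideanSpace ℝ (Fin d)
abbrev Phase (d : ℕ) := Euc d × Euc d

/-- A probability density on a measure space. -/
def IsProbDensity {X : Type*} [MeasureSpace X] (ρ : X → ℝ) : Prop :=
  (∀ x, 0 ≤ ρ x) ∧ MeasureTheory.Integrable ρ ∧ ∫ x, ρ x = 1

/-- All moments of order up to `N` are finite. -/
def HasMomentsUpTo {X : Type*} [MeasureSpace X] [Norm X] (N : ℕ) (ρ : X → ℝ) : Prop :=
  ∀ k ≤ N, MeasureTheory.Integrable (fun x => ‖x‖ ^ k * ρ x)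

variable {d : ℕ}

/-- Convolution `(ψ ∗ ρ)(q)` of `ψ` with a phase-space density `ρ`. -/
def psiConv (ψ : Euc d → ℝ) (ρ : Phase d → ℝ) (q : Euc d) : ℝ :=
  ∫ y : Phase d, ψ (q - y.1) * ρ y

/-- Divergence in the `q` variables of a vector field on phase space. -/
def divQ (F : Phase d → Euc d) (x : Phase d) : ℝ :=
  ∑ i : Fin d, fderiv ℝ (fun y => F y i) x (EuclideanSpace.single i 1, 0)

/-- Divergence in the `p` variables of a vector field on phase space. -/
def divP (F : Phase d → Euc d) (x : Phase d) : ℝ :=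
  ∑ i : Fin d, fderiv ℝ (fun y => F y i) x (0, EuclideanSpace.single i 1)

/-- Laplacian in the `p` variables. -/
def lapP (f : Phase d → ℝ) (x : Phase d) : ℝ :=
  ∑ i : Fin d, fderiv ℝ (fun y => fderiv ℝ f y (0, EuclideanSpace.single i 1)) x
    (0, EuclideanSpace.single i 1)

/-- Gradient in the `q` variables. -/
def gradQ (f : Phase d → ℝ) (x : Phase d) : Euc d := gradient (fun q => f (q, x.2)) x.1

/-- Gradient in the `p` variables. -/
def gradP (f : Phase d → ℝ) (x : Phase d) : Euc d := gradient (fun p => f (x.1, p)) x.2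

/-- The drift `h(q) = ∇V(q) + ∇(ψ∗μ)(q)`. -/
def drift (V ψ : Euc d → ℝ) (μ : Phase d → ℝ) (q : Euc d) : Euc d :=
  gradient V q + gradient (psiConv ψ μ) q

/-- Linearized stationary Vlasov–Fokker–Planck operator
`K[μ](ρ) = −div_q(ρ p) + div_p(ρ (∇V + ∇ψ∗μ + p)) + λ Δ_p ρ`. -/
def Kop (V ψ : Euc d → ℝ) (lam : ℝ) (μ ρ : Phase d → ℝ) (x : Phase d) : ℝ :=
  - divQ (fun y => ρ y • y.2) x
  + divP (fun y => ρ y • (drift V ψ μ y.1 + y.2)) x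
  + lam * lapP ρ x

/-- The (unnormalized) Gibbs density `exp(−(|p|²/2 + V(q) + ψ∗μ(q))/λ)`. -/
def gibbs (V ψ : Euc d → ℝ) (lam : ℝ) (μ : Phase d → ℝ) (x : Phase d) : ℝ :=
  Real.exp (-(‖x.2‖ ^ 2 / 2 + V x.1 + psiConv ψ μ x.1) / lam)

/-- The normalized Gibbs density `u`. -/
def uDens (V ψ : Euc d → ℝ) (lam : ℝ) (μ : Phase d → ℝ) (x : Phase d) : ℝ :=
  (∫ y : Phase d, gibbs V ψ lam μ y)⁻¹ * gibbs V ψ lam μ x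

/-- The weight `1 + |p| + |h(q)|`. -/
def weightFn (V ψ : Euc d → ℝ) (μ : Phase d → ℝ) (x : Phase d) : ℝ :=
  1 + ‖x.2‖ + ‖drift V ψ μ x.1‖

/-- The class `A`: `v` is `C¹` in `q`, `C²` in `p`, and `f = v·u^{−1/2}` lies in the
weighted Sobolev space `H¹((1+|p|+|h|) dq dp)` with `Δ_p f ∈ L²`. -/
def InClassA (V ψ : Euc d → ℝ) (lam : ℝ) (μ : Phase d → ℝ) (v : Phase d → ℝ) : Prop :=
  (∀ p, ContDiff ℝ 1 (fun q => v (q, p))) ∧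
  (∀ q, ContDiff ℝ 2 (fun p => v (q, p))) ∧
  MeasureTheory.Integrable
    (fun x => (v x / Real.sqrt (uDens V ψ lam μ x)) ^ 2 * weightFn V ψ μ x) ∧
  MeasureTheory.Integrable
    (fun x => ‖fderiv ℝ (fun y => v y / Real.sqrt (uDens V ψ lam μ y)) x‖ ^ 2 *
      weightFn V ψ μ x) ∧
  MeasureTheory.Integrable
    (fun x => (lapP (fun y => v y / Real.sqrt (uDens V ψ lam μ y)) x) ^ 2)

/-- Assumptions (V1)–(V4) on the confining potential `V`. -/
structure VAssumptions (d : ℕ) (V : Euc d → ℝ) (m : ℕ) : Prop where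
  smooth : ContDiff ℝ (⊤ : ℕ∞) V
  m_pos : 1 ≤ m
  growth : ∃ C > (0:ℝ),
    Tendsto (fun x : Euc d => V x / ‖x‖ ^ (2 * m)) (Bornology.cobounded _) (nhds C)
  crit_finite : {x : Euc d | gradient V x = 0}.Finite
  lower_bound : ∃ C4 > (0:ℝ), ∃ C2 > (0:ℝ), ∀ x : Euc d, C4 * ‖x‖ ^ 4 - C2 * ‖x‖ ^ 2 ≤ V x
  hess : ∃ K : Set (Euc d), IsCompact K ∧ {x : Euc d | gradient V x = 0} ⊆ K ∧
    (∀ x ∉ K, ∀ v : Euc d, v ≠ 0 → 0 < fderiv ℝ (fun y => fderiv ℝ V y v) x v) ∧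
    (∀ C : ℝ, ∃ R : ℝ, ∀ x : Euc d, R ≤ ‖x‖ → ∀ v : Euc d, ‖v‖ = 1 →
      C ≤ fderiv ℝ (fun y => fderiv ℝ V y v) x v)

/-- Assumptions (ψ1)–(ψ3) on the interaction potential `ψ = G(|·|)`. -/
structure PsiAssumptions (d : ℕ) (ψ : Euc d → ℝ) (n : ℕ) : Prop where
  n_pos : 1 ≤ n
  exG : ∃ G : Polynomial ℝ,
    (∀ x : Euc d, ψ x = Polynomial.eval ‖x‖ G) ∧
    (∀ t : ℝ, Polynomial.eval (-t) G = Polynomial.eval t G) ∧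
    G.natDegree = 2 * n ∧
    ConvexOn ℝ Set.univ (fun t => Polynomial.eval t G) ∧
    ConvexOn ℝ Set.univ (fun t => Polynomial.eval t (G.derivative.derivative)) ∧
    Polynomial.eval 0 G = 0

/-- Invariant probability of the Vlasov–Fokker–Planck equation: a probability density
satisfying the Gibbs fixed-point identity. -/
def IsInvariantVFP (V ψ : Euc d → ℝ) (lam : ℝ) (ρ : Phase d → ℝ) : Prop :=
  IsProbDensity ρ ∧
  ∀ x : Phase d, ρ x = (∫ y : Phase d, gibbs V ψ lam ρ y)⁻¹ * gibbs V ψ lam ρ x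


/-! ### Auxiliary lemmas -/

section Aux

open Polynomial in
lemma coeff_comp_negX (p : Polynomial ℝ) (k : ℕ) :
    (p.comp (-X)).coeff k = (-1)^k * p.coeff k := by
  rw [comp_eq_sum_left, Polynomial.sum_def, finset_sum_coeff]
  have h2 : ∀ i ∈ p.support, (C (p.coeff i) * (-X) ^ i).coeff k
      = (if i = k then (-1:ℝ)^k * p.coeff i else 0) := by
    intro i _
    have : ((-X : ℝ[X]))^i = C ((-1:ℝ)^i) * X^i := by
      rw [neg_pow]; simp [map_pow]
    rw [this, ← mul_assoc, ← map_mul, coeff_C_mul, coeff_X_pow]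
    by_cases h : i = k
    · simp [h, mul_comm]
    · rw [if_neg (fun h' => h h'.symm), if_neg h, mul_zero]
  rw [Finset.sum_congr rfl h2, Finset.sum_ite_eq' p.support k]
  by_cases h : k ∈ p.support
  · simp [h]
  · simp only [h, if_false]
    rw [Polynomial.notMem_support_iff.mp h, mul_zero]

open Polynomial in
lemma odd_coeff_zero (G : Polynomial ℝ) (heven : ∀ t : ℝ, G.eval (-t) = G.eval t)
    (k : ℕ) (hk : ¬ Even k) : G.coeff k = 0 := by
  have hG : G.comp (-X) = G := by
    apply Polynomial.funext
    intro t
    simp [heven t]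
  have h1 : (G.comp (-X)).coeff k = G.coeff k := by rw [hG]
  rw [coeff_comp_negX, (Odd.neg_one_pow (Nat.not_even_iff_odd.mp hk))] at h1
  linarith

lemma Euc.norm_sq_eq (x : Euc d) : ‖x‖^2 = ∑ i, x i ^ 2 := by
  rw [EuclideanSpace.norm_eq, Real.sq_sqrt (by positivity)]
  simp [sq_abs]

lemma Euc.abs_apply_le (x : Euc d) (i : Fin d) : |x i| ≤ ‖x‖ := by
  have h1 : (x i)^2 ≤ ‖x‖^2 := by
    rw [Euc.norm_sq_eq]
    exact Finset.single_le_sum (f := fun j => x j ^ 2) (fun j _ => sq_nonneg _) (Finset.mem_univ i)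
  calc |x i| = Real.sqrt ((x i)^2) := (Real.sqrt_sq_eq_abs _).symm
    _ ≤ Real.sqrt (‖x‖^2) := Real.sqrt_le_sqrt h1
    _ = ‖x‖ := Real.sqrt_sq (norm_nonneg _)

def sqPoly (d : ℕ) : MvPolynomial (Fin d ⊕ Fin d) ℝ :=
  ∑ i : Fin d, (MvPolynomial.X (Sum.inl i) - MvPolynomial.X (Sum.inr i))^2

lemma eval_sqPoly (q z : Euc d) :
    MvPolynomial.eval (Sum.elim q z) (sqPoly d) = ‖q - z‖^2 := by
  rw [Euc.norm_sq_eq, sqPoly, map_sum]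
  congr 1; ext i
  simp [sub_sq]

def psiPoly (d n : ℕ) (G : Polynomial ℝ) : MvPolynomial (Fin d ⊕ Fin d) ℝ :=
  ∑ k ∈ Finset.range (2*n+1), MvPolynomial.C (G.coeff k) * (sqPoly d)^(k/2)

lemma totalDegree_psiPoly (d n : ℕ) (G : Polynomial ℝ) :
    (psiPoly d n G).totalDegree ≤ 2*n := by
  refine MvPolynomial.totalDegree_finsetSum_le ?_
  intro k hk
  calc (MvPolynomial.C (G.coeff k) * (sqPoly d)^(k/2)).totalDegree
      ≤ _ + _ := MvPolynomial.totalDegree_mul _ _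
    _ ≤ 0 + (k/2) * 2 := by
        gcongr
        · exact le_of_eq (MvPolynomial.totalDegree_C _)
        · refine (MvPolynomial.totalDegree_pow _ _).trans ?_
          gcongr
          refine MvPolynomial.totalDegree_finsetSum_le ?_
          intro i _
          refine (MvPolynomial.totalDegree_pow _ _).trans ?_
          have : (MvPolynomial.X (Sum.inl i) - MvPolynomial.X (Sum.inr i) :
              MvPolynomial (Fin d ⊕ Fin d) ℝ).totalDegree ≤ 1 := by
            refine (MvPolynomial.totalDegree_sub _ _).trans ?_
            simp [MvPolynomial.totalDegree_X]
          omega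
    _ ≤ 2*n := by
        have := Finset.mem_range.mp hk
        have := Nat.div_mul_le_self k 2
        omega

lemma eval_psiPoly (n : ℕ) (G : Polynomial ℝ) (hdeg : G.natDegree = 2*n)
    (hodd : ∀ k, ¬ Even k → G.coeff k = 0) (q z : Euc d) :
    Polynomial.eval ‖q - z‖ G = MvPolynomial.eval (Sum.elim q z) (psiPoly d n G) := by
  rw [Polynomial.eval_eq_sum_range, hdeg, psiPoly, map_sum]
  refine Finset.sum_congr rfl ?_
  intro k hk
  rw [map_mul, MvPolynomial.eval_C, map_pow, eval_sqPoly]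
  by_cases he : Even k
  · obtain ⟨j, hj⟩ := he
    congr 1
    rw [← pow_mul]
    congr 1
    omega
  · simp [hodd k he]

lemma integrable_monomial_mul (μ : Phase d → ℝ) (hμ : IsProbDensity μ)
    {N : ℕ} (hmom : HasMomentsUpTo N μ) (m : (Fin d ⊕ Fin d) →₀ ℕ)
    (hm : (∑ i : Fin d, m (Sum.inr i)) ≤ N) :
    MeasureTheory.Integrable (fun y : Phase d => (∏ i : Fin d, y.1 i ^ m (Sum.inr i)) * μ y) := by
  have hmeas : AEStronglyMeasurable
      (fun y : Phase d => (∏ i : Fin d, y.1 i ^ m (Sum.inr i)) * μ y) volume := by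
    refine (Continuous.aestronglyMeasurable ?_).mul hμ.2.1.aestronglyMeasurable
    exact continuous_finset_prod _
      (fun i _ => ((EuclideanSpace.proj i).continuous.comp continuous_fst).pow _)
  refine (hmom _ hm).mono' hmeas ?_
  refine Eventually.of_forall (fun y => ?_)
  rw [Real.norm_eq_abs, abs_mul]
  have h1 : |∏ i : Fin d, y.1 i ^ m (Sum.inr i)| ≤ ‖y‖ ^ (∑ i : Fin d, m (Sum.inr i)) := by
    rw [Finset.abs_prod, ← Finset.prod_pow_eq_pow_sum]
    refine Finset.prod_le_prod (fun i _ => abs_nonneg _) (fun i _ => ?_)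
    rw [abs_pow]
    exact pow_le_pow_left₀ (abs_nonneg _) ((Euc.abs_apply_le _ i).trans (norm_fst_le y)) _
  rw [abs_of_nonneg (hμ.1 y)]
  exact mul_le_mul_of_nonneg_right h1 (hμ.1 y)

lemma psiConv_repr {n : ℕ} {ψ : Euc d → ℝ} (hψ : PsiAssumptions d ψ n)
    (μ : Phase d → ℝ) (hμ : IsProbDensity μ) (hmom : HasMomentsUpTo (2*n) μ) :
    ∃ (s : Finset ((Fin d ⊕ Fin d) →₀ ℕ)) (c : ((Fin d ⊕ Fin d) →₀ ℕ) → ℝ),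
      psiConv ψ μ = fun q => ∑ m ∈ s, c m * ∏ i : Fin d, q i ^ m (Sum.inl i) := by
  obtain ⟨G, hGval, hGeven, hGdeg, -, -, -⟩ := hψ.exG
  have hodd : ∀ k, ¬ Even k → G.coeff k = 0 := fun k hk => odd_coeff_zero G hGeven k hk
  set P := psiPoly d n G with hP
  refine ⟨P.support, fun m => MvPolynomial.coeff m P *
    ∫ y : Phase d, (∏ i : Fin d, y.1 i ^ m (Sum.inr i)) * μ y, ?_⟩
  funext q
  have hsum : ∀ m ∈ P.support, (∑ i : Fin d, m (Sum.inr i)) ≤ 2*n := by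
    intro m hm
    have h1 := MvPolynomial.le_totalDegree hm
    have h2 : P.totalDegree ≤ 2*n := totalDegree_psiPoly d n G
    have h3 : (m.sum fun _ e => e) = ∑ i : Fin d ⊕ Fin d, m i :=
      Finsupp.sum_fintype _ _ (fun _ => rfl)
    rw [h3, Fintype.sum_sum_type] at h1
    have h4 : (∑ i : Fin d, m (Sum.inr i)) ≤ (∑ a : Fin d, m (Sum.inl a)) +
        (∑ b : Fin d, m (Sum.inr b)) := Nat.le_add_left _ _
    omega
  have hint : ∀ m ∈ P.support, MeasureTheory.Integrable
      (fun y : Phase d => (MvPolynomial.coeff m P * ∏ i : Fin d, q i ^ m (Sum.inl i)) *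
        ((∏ i : Fin d, y.1 i ^ m (Sum.inr i)) * μ y)) := by
    intro m hm
    exact (integrable_monomial_mul μ hμ hmom m (hsum m hm)).const_mul _
  calc psiConv ψ μ q
      = ∫ y : Phase d, (∑ m ∈ P.support,
          (MvPolynomial.coeff m P * ∏ i : Fin d, q i ^ m (Sum.inl i)) *
          ((∏ i : Fin d, y.1 i ^ m (Sum.inr i)) * μ y)) := by
        refine integral_congr_ae (Eventually.of_forall (fun y => ?_))
        have h5 : ψ (q - y.1) = MvPolynomial.eval (Sum.elim q y.1) P := by
          rw [hGval, eval_psiPoly n G hGdeg hodd]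
        dsimp only
        rw [h5, MvPolynomial.eval_eq', Finset.sum_mul]
        refine Finset.sum_congr rfl (fun m hm => ?_)
        rw [Fintype.prod_sum_type]
        simp only [Sum.elim_inl, Sum.elim_inr]
        ring
    _ = ∑ m ∈ P.support, (MvPolynomial.coeff m P *
          ∫ y : Phase d, (∏ i : Fin d, y.1 i ^ m (Sum.inr i)) * μ y) *
          ∏ i : Fin d, q i ^ m (Sum.inl i) := by
        rw [MeasureTheory.integral_finset_sum _ hint]
        refine Finset.sum_congr rfl (fun m hm => ?_)
        rw [MeasureTheory.integral_const_mul]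
        ring

lemma psiConv_contDiff {n : ℕ} {ψ : Euc d → ℝ} (hψ : PsiAssumptions d ψ n)
    (μ : Phase d → ℝ) (hμ : IsProbDensity μ) (hmom : HasMomentsUpTo (2*n) μ) :
    ContDiff ℝ (⊤ : ℕ∞) (psiConv ψ μ) := by
  obtain ⟨s, c, hrepr⟩ := psiConv_repr hψ μ hμ hmom
  rw [hrepr]
  refine ContDiff.sum (fun m _ => ContDiff.mul contDiff_const ?_)
  exact contDiff_prod (fun i _ => ((EuclideanSpace.proj (𝕜 := ℝ) i).contDiff).pow _)

lemma psi_nonneg {n : ℕ} {ψ : Euc d → ℝ} (hψ : PsiAssumptions d ψ n) (x : Euc d) :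
    0 ≤ ψ x := by
  obtain ⟨G, hGval, hGeven, -, hconv, -, hG0⟩ := hψ.exG
  rw [hGval]
  have h := hconv.2 (Set.mem_univ (‖x‖)) (Set.mem_univ (-‖x‖))
    (by norm_num : (0:ℝ) ≤ 1/2) (by norm_num : (0:ℝ) ≤ 1/2) (by norm_num)
  simp only [smul_eq_mul] at h
  have h2 : (1/2 : ℝ) * ‖x‖ + (1/2) * (-‖x‖) = 0 := by ring
  rw [h2, hG0, hGeven] at h
  linarith

lemma psiConv_nonneg {n : ℕ} {ψ : Euc d → ℝ} (hψ : PsiAssumptions d ψ n)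
    (μ : Phase d → ℝ) (hμ : IsProbDensity μ) (q : Euc d) : 0 ≤ psiConv ψ μ q := by
  refine MeasureTheory.integral_nonneg (fun y => ?_)
  exact mul_nonneg (psi_nonneg hψ _) (hμ.1 y)

end Aux


section Gibbs

lemma integrable_gauss_euc (b : ℝ) (hb : 0 < b) :
    MeasureTheory.Integrable (fun v : Euc d => Real.exp (-b * ‖v‖^2)) := by
  have h := (GaussianFourier.integrable_cexp_neg_mul_sq_norm_add (V := Euc d)
    (b := (b : ℂ)) (by simpa using hb) 0 0).norm
  refine h.congr (Eventually.of_forall (fun v => ?_))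
  have : (-(b:ℂ) * (‖v‖:ℂ)^2 + 0 * (inner ℝ (0 : Euc d) v : ℝ)) = ((-b * ‖v‖^2 : ℝ) : ℂ) := by
    push_cast; ring
  dsimp only
  rw [this]
  rw [Complex.norm_exp, Complex.ofReal_re]

lemma V_quad_lower {m : ℕ} {V : Euc d → ℝ} (hV : VAssumptions d V m) :
    ∃ B : ℝ, ∀ q : Euc d, ‖q‖^2 - B ≤ V q := by
  obtain ⟨C4, hC4, C2, hC2, hlow⟩ := hV.lower_bound
  refine ⟨(C2+1)^2/(4*C4), fun q => ?_⟩
  have h := hlow q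
  have h2 : ‖q‖^2 - (C2+1)^2/(4*C4) ≤ C4 * ‖q‖^4 - C2 * ‖q‖^2 := by
    have hsq := sq_nonneg (2*C4*‖q‖^2 - (C2+1))
    have h4 : ‖q‖^4 = (‖q‖^2)^2 := by ring
    have hBmul : (C2+1)^2/(4*C4)*(4*C4) = (C2+1)^2 := div_mul_cancel₀ _ (by positivity)
    rw [h4]
    nlinarith [hsq, hBmul, hC4]
  linarith

variable {m n : ℕ} {V ψ : Euc d → ℝ} {lam : ℝ} {μ : Phase d → ℝ}

lemma gibbs_continuous (hV : VAssumptions d V m) (hψ : PsiAssumptions d ψ n)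
    (hμ : IsProbDensity μ) (hmom : HasMomentsUpTo (2*n) μ) :
    Continuous (gibbs V ψ lam μ) := by
  have h1 : Continuous (psiConv ψ μ) := (psiConv_contDiff hψ μ hμ hmom).continuous
  exact Real.continuous_exp.comp (Continuous.div_const (Continuous.neg
    ((((continuous_snd.norm.pow 2).div_const 2).add
      (hV.smooth.continuous.comp continuous_fst)).add
      (h1.comp continuous_fst))) lam)

lemma gibbs_pos (x : Phase d) : 0 < gibbs V ψ lam μ x := Real.exp_pos _

lemma gibbs_integrable (hV : VAssumptions d V m) (hψ : PsiAssumptions d ψ n)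
    (hlam : 0 < lam) (hμ : IsProbDensity μ) (hmom : HasMomentsUpTo (2*n) μ) :
    MeasureTheory.Integrable (gibbs V ψ lam μ) := by
  obtain ⟨B, hB⟩ := V_quad_lower hV
  have hbound : MeasureTheory.Integrable (fun x : Phase d =>
      Real.exp (B/lam) * (Real.exp (-(1/lam) * ‖x.1‖^2) * Real.exp (-(1/(2*lam)) * ‖x.2‖^2))) := by
    refine MeasureTheory.Integrable.const_mul ?_ _
    rw [Measure.volume_eq_prod]
    exact (integrable_gauss_euc _ (by positivity)).mul_prod
      (integrable_gauss_euc _ (by positivity))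
  refine hbound.mono' ((gibbs_continuous hV hψ hμ hmom).aestronglyMeasurable)
    (Eventually.of_forall (fun x => ?_))
  rw [Real.norm_eq_abs, abs_of_pos (gibbs_pos x)]
  simp only [gibbs]
  rw [← Real.exp_add, ← Real.exp_add]
  refine Real.exp_le_exp.mpr ?_
  have h1 : ‖x.1‖^2 - B ≤ V x.1 := hB x.1
  have h2 : 0 ≤ psiConv ψ μ x.1 := psiConv_nonneg hψ μ hμ x.1
  
  rw [div_le_iff₀ hlam] at *
  have hexp : (B/lam + (-(1/lam) * ‖x.1‖^2 + -(1/(2*lam)) * ‖x.2‖^2)) * lam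
      = B - ‖x.1‖^2 - ‖x.2‖^2/2 := by field_simp; ring
  rw [hexp]
  linarith

lemma gibbs_integral_pos (hV : VAssumptions d V m) (hψ : PsiAssumptions d ψ n)
    (hlam : 0 < lam) (hμ : IsProbDensity μ) (hmom : HasMomentsUpTo (2*n) μ) :
    0 < ∫ y : Phase d, gibbs V ψ lam μ y := by
  rw [MeasureTheory.integral_pos_iff_support_of_nonneg
    (fun x => (gibbs_pos x).le) (gibbs_integrable hV hψ hlam hμ hmom)]
  have hsupp : Function.support (gibbs V ψ lam μ) = Set.univ :=
    Set.eq_univ_of_forall (fun x => (gibbs_pos (V := V) (ψ := ψ) (lam := lam) (μ := μ) x).ne')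
  rw [hsupp]
  have h1 : (0 : ENNReal) < volume (Metric.ball (0 : Phase d) 1) :=
    Metric.measure_ball_pos _ _ one_pos
  exact h1.trans_le (measure_mono (Set.subset_univ _))

lemma gibbs_contDiff (hV : VAssumptions d V m) (hψ : PsiAssumptions d ψ n)
    (hμ : IsProbDensity μ) (hmom : HasMomentsUpTo (2*n) μ) :
    ContDiff ℝ (⊤ : ℕ∞) (gibbs V ψ lam μ) := by
  have h1 : ContDiff ℝ (⊤ : ℕ∞) (psiConv ψ μ) := psiConv_contDiff hψ μ hμ hmom
  exact Real.contDiff_exp.comp (ContDiff.div_const (ContDiff.neg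
    (((((contDiff_snd (E := Euc d) (F := Euc d)).norm_sq ℝ).div_const 2).add
      (hV.smooth.comp contDiff_fst)).add
      (h1.comp contDiff_fst))) lam)

lemma uDens_contDiff (hV : VAssumptions d V m) (hψ : PsiAssumptions d ψ n)
    (hμ : IsProbDensity μ) (hmom : HasMomentsUpTo (2*n) μ) :
    ContDiff ℝ (⊤ : ℕ∞) (uDens V ψ lam μ) :=
  contDiff_const.mul (gibbs_contDiff hV hψ hμ hmom)

lemma uDens_isProbDensity (hV : VAssumptions d V m) (hψ : PsiAssumptions d ψ n)
    (hlam : 0 < lam) (hμ : IsProbDensity μ) (hmom : HasMomentsUpTo (2*n) μ) :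
    IsProbDensity (uDens V ψ lam μ) := by
  have hC := gibbs_integral_pos hV hψ hlam hμ hmom
  refine ⟨fun x => mul_nonneg (inv_nonneg.mpr hC.le) (gibbs_pos x).le, ?_, ?_⟩
  · exact (gibbs_integrable hV hψ hlam hμ hmom).const_mul _
  · simp only [uDens]
    rw [MeasureTheory.integral_const_mul]
    exact inv_mul_cancel₀ hC.ne'

end Gibbs


section PDE

variable {m n : ℕ} {V ψ : Euc d → ℝ} {lam : ℝ} {μ : Phase d → ℝ}

/-- The derivative of the exponent of the Gibbs density. -/
def expD (lam : ℝ) (Vd Pd : Euc d →L[ℝ] ℝ) (p : Euc d) : Phase d →L[ℝ] ℝ :=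
  (-lam⁻¹ : ℝ) • ((innerSL ℝ p).comp (ContinuousLinearMap.snd ℝ (Euc d) (Euc d))
    + Vd.comp (ContinuousLinearMap.fst ℝ (Euc d) (Euc d))
    + Pd.comp (ContinuousLinearMap.fst ℝ (Euc d) (Euc d)))

lemma expD_apply (lam : ℝ) (Vd Pd : Euc d →L[ℝ] ℝ) (p : Euc d) (v : Phase d) :
    expD lam Vd Pd p v = -lam⁻¹ * (⟪p, v.2⟫ + Vd v.1 + Pd v.1) := by
  simp [expD, ContinuousLinearMap.smul_apply, ContinuousLinearMap.add_apply,
    ContinuousLinearMap.comp_apply]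
  ring

lemma hasFDerivAt_gibbs (hV : VAssumptions d V m) (hψ : PsiAssumptions d ψ n)
    (hlam : 0 < lam) (hμ : IsProbDensity μ) (hmom : HasMomentsUpTo (2*n) μ) (x : Phase d) :
    HasFDerivAt (gibbs V ψ lam μ)
      (gibbs V ψ lam μ x • expD lam (fderiv ℝ V x.1) (fderiv ℝ (psiConv ψ μ) x.1) x.2) x := by
  have hfun : gibbs V ψ lam μ = fun y : Phase d =>
      Real.exp ((-lam⁻¹ : ℝ) * ((2:ℝ)⁻¹ * ‖y.2‖^2 + (V y.1 + psiConv ψ μ y.1))) := by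
    funext y
    rw [gibbs]
    congr 1
    field_simp
    ring
  have hv : DifferentiableAt ℝ V x.1 := (hV.smooth.differentiable (by simp)).differentiableAt
  have hp : DifferentiableAt ℝ (psiConv ψ μ) x.1 :=
    ((psiConv_contDiff hψ μ hμ hmom).differentiable (by simp)).differentiableAt
  have h1 : HasFDerivAt (fun y : Phase d => ‖y.2‖^2)
      (2 • (innerSL ℝ x.2).comp (ContinuousLinearMap.snd ℝ (Euc d) (Euc d))) x :=
    hasFDerivAt_snd.norm_sq
  have h2 : HasFDerivAt (fun y : Phase d => V y.1)
      ((fderiv ℝ V x.1).comp (ContinuousLinearMap.fst ℝ (Euc d) (Euc d))) x :=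
    hv.hasFDerivAt.comp x hasFDerivAt_fst
  have h3 : HasFDerivAt (fun y : Phase d => psiConv ψ μ y.1)
      ((fderiv ℝ (psiConv ψ μ) x.1).comp (ContinuousLinearMap.fst ℝ (Euc d) (Euc d))) x :=
    hp.hasFDerivAt.comp x hasFDerivAt_fst
  have h5 := (((h1.const_mul ((2:ℝ)⁻¹)).add (h2.add h3)).const_mul (-lam⁻¹ : ℝ)).exp
  have hDeq : expD lam (fderiv ℝ V x.1) (fderiv ℝ (psiConv ψ μ) x.1) x.2
      = (-lam⁻¹ : ℝ) • ((2:ℝ)⁻¹ • 2 • (innerSL ℝ x.2).comp (ContinuousLinearMap.snd ℝ (Euc d) (Euc d))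
        + ((fderiv ℝ V x.1).comp (ContinuousLinearMap.fst ℝ (Euc d) (Euc d))
          + (fderiv ℝ (psiConv ψ μ) x.1).comp (ContinuousLinearMap.fst ℝ (Euc d) (Euc d)))) := by
    refine ContinuousLinearMap.ext (fun v => ?_)
    simp only [expD, ContinuousLinearMap.smul_apply, ContinuousLinearMap.add_apply,
      ContinuousLinearMap.comp_apply, ContinuousLinearMap.coe_fst', ContinuousLinearMap.coe_snd',
      innerSL_apply_apply, smul_eq_mul, nsmul_eq_mul, Nat.cast_ofNat]
    ring
  rw [hfun, hDeq]
  exact h5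

lemma hasFDerivAt_uDens (hV : VAssumptions d V m) (hψ : PsiAssumptions d ψ n)
    (hlam : 0 < lam) (hμ : IsProbDensity μ) (hmom : HasMomentsUpTo (2*n) μ) (x : Phase d) :
    HasFDerivAt (uDens V ψ lam μ)
      (uDens V ψ lam μ x • expD lam (fderiv ℝ V x.1) (fderiv ℝ (psiConv ψ μ) x.1) x.2) x := by
  have h := (hasFDerivAt_gibbs hV hψ hlam hμ hmom x).const_mul
    ((∫ y : Phase d, gibbs V ψ lam μ y)⁻¹)
  rw [smul_smul] at h
  exact h

lemma gradient_coord (f : Euc d → ℝ) (q : Euc d) (i : Fin d) :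
    gradient f q i = fderiv ℝ f q (EuclideanSpace.single i 1) := by
  calc gradient f q i = ⟪EuclideanSpace.single i (1:ℝ), gradient f q⟫ := by
        rw [EuclideanSpace.inner_single_left]; simp
    _ = ⟪gradient f q, EuclideanSpace.single i (1:ℝ)⟫ := real_inner_comm _ _
    _ = fderiv ℝ f q (EuclideanSpace.single i 1) := InnerProductSpace.toDual_symm_apply

lemma drift_coord (q : Euc d) (i : Fin d) :
    drift V ψ μ q i = fderiv ℝ V q (EuclideanSpace.single i 1)
      + fderiv ℝ (psiConv ψ μ) q (EuclideanSpace.single i 1) := by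
  show (gradient V q + gradient (psiConv ψ μ) q) i = _
  rw [PiLp.add_apply, gradient_coord, gradient_coord]

lemma drift_coord_contDiff (hV : VAssumptions d V m) (hψ : PsiAssumptions d ψ n)
    (hμ : IsProbDensity μ) (hmom : HasMomentsUpTo (2*n) μ) (i : Fin d) :
    ContDiff ℝ (⊤ : ℕ∞) (fun q : Euc d => drift V ψ μ q i) := by
  have heq : (fun q : Euc d => drift V ψ μ q i)
      = fun q => fderiv ℝ V q (EuclideanSpace.single i 1)
        + fderiv ℝ (psiConv ψ μ) q (EuclideanSpace.single i 1) := by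
    funext q; rw [drift_coord]
  rw [heq]
  have h1 : ContDiff ℝ (⊤ : ℕ∞) (fderiv ℝ V) := hV.smooth.fderiv_right (by simp)
  have h2 : ContDiff ℝ (⊤ : ℕ∞) (fderiv ℝ (psiConv ψ μ)) :=
    (psiConv_contDiff hψ μ hμ hmom).fderiv_right (by simp)
  exact (((ContinuousLinearMap.apply ℝ ℝ
      (EuclideanSpace.single i (1:ℝ))).contDiff).comp h1).add
    (((ContinuousLinearMap.apply ℝ ℝ (EuclideanSpace.single i (1:ℝ))).contDiff).comp h2)

lemma kop_uDens_zero (hV : VAssumptions d V m) (hψ : PsiAssumptions d ψ n)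
    (hlam : 0 < lam) (hμ : IsProbDensity μ) (hmom : HasMomentsUpTo (2*n) μ) (x : Phase d) :
    Kop V ψ lam μ (uDens V ψ lam μ) x = 0 := by
  set u := uDens V ψ lam μ with hu_def
  have hu : ∀ y : Phase d, HasFDerivAt u
      (u y • expD lam (fderiv ℝ V y.1) (fderiv ℝ (psiConv ψ μ) y.1) y.2) y :=
    fun y => hasFDerivAt_uDens hV hψ hlam hμ hmom y
  rw [Kop, divQ, divP, lapP, Finset.mul_sum, ← Finset.sum_neg_distrib,
    ← Finset.sum_add_distrib, ← Finset.sum_add_distrib]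
  refine Finset.sum_eq_zero (fun i _ => ?_)
  set ei : Euc d := EuclideanSpace.single i 1 with hei
  have hsnd_i : HasFDerivAt (fun y : Phase d => y.2 i)
      ((EuclideanSpace.proj i).comp (ContinuousLinearMap.snd ℝ (Euc d) (Euc d))) x :=
    ((EuclideanSpace.proj (𝕜 := ℝ) i).comp
      (ContinuousLinearMap.snd ℝ (Euc d) (Euc d))).hasFDerivAt
  -- A term
  have hfunA : (fun y : Phase d => (u y • y.2) i) = fun y => u y * y.2 i := by
    funext y; rw [PiLp.smul_apply, smul_eq_mul]
  have hA := ((hu x).mul hsnd_i).fderiv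
  -- B term
  have hdrifti : HasFDerivAt (fun y : Phase d => drift V ψ μ y.1 i)
      ((fderiv ℝ (fun q : Euc d => drift V ψ μ q i) x.1).comp
        (ContinuousLinearMap.fst ℝ (Euc d) (Euc d))) x :=
    (((drift_coord_contDiff hV hψ hμ hmom i).differentiable
      (by simp)).differentiableAt.hasFDerivAt).comp x hasFDerivAt_fst
  have hfunB : (fun y : Phase d => (u y • (drift V ψ μ y.1 + y.2)) i)
      = fun y => u y * (drift V ψ μ y.1 i + y.2 i) := by
    funext y; rw [PiLp.smul_apply, smul_eq_mul, PiLp.add_apply]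
  have hB := ((hu x).mul (hdrifti.add hsnd_i)).fderiv
  -- C term
  have hfunC : (fun y : Phase d => fderiv ℝ u y (0, ei))
      = fun y => u y * (-lam⁻¹ * y.2 i) := by
    funext y
    rw [(hu y).fderiv, ContinuousLinearMap.smul_apply, expD_apply]
    simp only [hei, EuclideanSpace.inner_single_right, map_zero, RCLike.star_def, conj_trivial,
      one_mul, add_zero, smul_eq_mul]
  have hsndc : HasFDerivAt (fun y : Phase d => -lam⁻¹ * y.2 i)
      ((-lam⁻¹ : ℝ) • ((EuclideanSpace.proj i).comp
        (ContinuousLinearMap.snd ℝ (Euc d) (Euc d)))) x := hsnd_i.const_mul _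
  have hC := ((hu x).mul hsndc).fderiv
  simp only [Pi.mul_def, Pi.add_def] at hA hB hC
  rw [hfunA, hA, hfunB, hB, hfunC, hC]
  simp only [ContinuousLinearMap.add_apply, ContinuousLinearMap.smul_apply, smul_eq_mul,
    ContinuousLinearMap.comp_apply, ContinuousLinearMap.coe_fst', ContinuousLinearMap.coe_snd',
    PiLp.proj_apply, expD_apply, map_zero, inner_zero_right]
  rw [drift_coord]
  have h1 : ei i = 1 := by rw [hei]; simp [EuclideanSpace.single_apply]
  have h2 : ⟪x.2, ei⟫ = x.2 i := by
    rw [hei, EuclideanSpace.inner_single_right]; simp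
  rw [← hei, h1, h2]
  field_simp
  ring

end PDE

/-- the normalized Gibbs density `u` is a smooth probability density solving
the linearized stationary VFP equation `K[μ](u) = 0`, with finite positive normalizing
constant. -/
theorem stationary_solution_of_linearized_VFP
    {d m n : ℕ} (hd : 1 ≤ d) (V ψ : Euc d → ℝ)
    (hV : VAssumptions d V m) (hψ : PsiAssumptions d ψ n)
    (lam : ℝ) (hlam : 0 < lam)
    (μ : Phase d → ℝ) (hμ : IsProbDensity μ) (hmom : HasMomentsUpTo (2 * n) μ) :
    MeasureTheory.Integrable (gibbs V ψ lam μ) ∧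
    0 < ∫ y : Phase d, gibbs V ψ lam μ y ∧
    ContDiff ℝ (⊤ : ℕ∞) (uDens V ψ lam μ) ∧
    IsProbDensity (uDens V ψ lam μ) ∧
    ∀ x : Phase d, Kop V ψ lam μ (uDens V ψ lam μ) x = 0 := by
  exact ⟨gibbs_integrable hV hψ hlam hμ hmom,
    gibbs_integral_pos hV hψ hlam hμ hmom,
    uDens_contDiff hV hψ hμ hmom,
    uDens_isProbDensity hV hψ hlam hμ hmom,
    fun x => kop_uDens_zero hV hψ hlam hμ hmom x⟩

end
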